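/- arXiv:2003.12014 — 2 statements merged into one kernel-verified Lean document; each statement's English description precedes it below -/
import Mathlib

section
/- If X_G is a finitary coarse space and the dynamical system (G, X*) is topologically transitive (some orbit Gp is dense in X*), then X_G is λ-tight. -/
open Set

/-- A coarse structure on a set `X`. -/
structure CoarseStructure (X : Type*) where
  sets : Set (Set (X × X))
  diagonal_mem : ∀ E ∈ sets, ∀ x : X, (x, x) ∈ E
  comp_mem : ∀ E ∈ sets, ∀ E' ∈ sets,
    {q : X × X | ∃ z : X, (q.1, z) ∈ E ∧ (z, q.2) ∈ E'} ∈ sets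
  inv_mem : ∀ E ∈ sets, {q : X × X | (q.2, q.1) ∈ E} ∈ sets
  subset_mem : ∀ E ∈ sets, ∀ E', E' ⊆ E → (∀ x : X, (x, x) ∈ E') → E' ∈ sets
  covers : ⋃₀ sets = Set.univ

/-- The ball `E[A]`. -/
def ball {X : Type*} (E : Set (X × X)) (A : Set X) : Set X := {y | ∃ a ∈ A, (a, y) ∈ E}

/-- A bounded subset of a coarse space. -/
def CoarseStructure.Bounded {X : Type*} (C : CoarseStructure X) (B : Set X) : Prop :=
  ∃ E ∈ C.sets, ∃ x : X, B ⊆ ball E {x}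

/-- A finitary coarse space: uniformly finite balls. -/
def CoarseStructure.Finitary {X : Type*} (C : CoarseStructure X) : Prop :=
  ∀ E ∈ C.sets, ∃ n : ℕ, ∀ x : X, (ball E {x}).Finite ∧ (ball E {x}).ncard < n

/-- The set `X^♯` of ultrafilters all of whose members are unbounded. -/
def CoarseStructure.Sharp {X : Type*} (C : CoarseStructure X) : Set (Ultrafilter X) :=
  {p | ∀ P ∈ p, ¬ C.Bounded P}

/-- The parallelity relation on ultrafilters. -/
def CoarseStructure.Parallel {X : Type*} (C : CoarseStructure X) (p q : Ultrafilter X) : Prop :=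
  ∃ E ∈ C.sets, ∀ P ∈ p, ball E P ∈ q

/-- The entourage determined by a set of permutations. -/
def entourage {X : Type*} (F : Set (Equiv.Perm X)) : Set (X × X) :=
  {q | ∃ g ∈ F, q.2 = g q.1}

/-- The finitary coarse structure `X_G` determined by a group `G` of permutations of `X`:
its entourages are the diagonal-containing subsets of `{(x,gx) : x ∈ X, g ∈ F}`
for finite `F ⊆ G` with `id ∈ F`. -/
def XGsets {X : Type*} (G : Subgroup (Equiv.Perm X)) : Set (Set (X × X)) :=
  {E | (∀ x : X, (x, x) ∈ E) ∧ ∃ F : Finset (Equiv.Perm X),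
    (1 : Equiv.Perm X) ∈ F ∧ ↑F ⊆ (G : Set (Equiv.Perm X)) ∧ E ⊆ entourage ↑F}

/-- A free ultrafilter. -/
def IsFree {X : Type*} (p : Ultrafilter X) : Prop := (p : Filter X) ≤ Filter.cofinite

/-- `X*`, the space of free ultrafilters with the Stone topology. -/
def FreeUF (X : Type*) : Type _ := {p : Ultrafilter X // IsFree p}

instance (X : Type*) : TopologicalSpace (FreeUF X) :=
  instTopologicalSpaceSubtype

/-- The orbit `Gp` of an ultrafilter under the induced action `gp = {gP : P ∈ p}`. -/
def ufOrbit {X : Type*} (G : Subgroup (Equiv.Perm X)) (p : Ultrafilter X) :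
    Set (Ultrafilter X) :=
  {q | ∃ g ∈ G, q = Ultrafilter.map (⇑g) p}

/-- The `p`-companion `Δ_p(A) = A* ∩ Gp`. -/
def compan {X : Type*} (G : Subgroup (Equiv.Perm X)) (p : Ultrafilter X) (A : Set X) :
    Set (Ultrafilter X) :=
  {q | A ∈ q ∧ q ∈ ufOrbit G p}

/-- Large subsets of `X_G`. -/
def IsLarge {X : Type*} (G : Subgroup (Equiv.Perm X)) (A : Set X) : Prop :=
  ∃ E ∈ XGsets G, ball E A = Set.univ

/-- Thick subsets of `X_G`. -/
def IsThick {X : Type*} (G : Subgroup (Equiv.Perm X)) (A : Set X) : Prop :=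
  ∀ E ∈ XGsets G, ∃ a ∈ A, ball E {a} ⊆ A

/-- Thin (discrete) subsets of `X_G`. -/
def IsThin {X : Type*} (G : Subgroup (Equiv.Perm X)) (A : Set X) : Prop :=
  ∀ E ∈ XGsets G, ∃ B : Set X, B.Finite ∧ ∀ a ∈ A \ B, ball E {a} ∩ A = {a}

/-- Sparse subsets of `X_G`. -/
def IsSparse {X : Type*} (G : Subgroup (Equiv.Perm X)) (A : Set X) : Prop :=
  ∀ p : Ultrafilter X, IsFree p → (compan G p A).Finite

/-- Scattered subsets of `X_G`. -/
def IsScattered {X : Type*} (G : Subgroup (Equiv.Perm X)) (A : Set X) : Prop :=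
  ∀ Y ⊆ A, Y.Infinite →
    ∃ p : Ultrafilter X, IsFree p ∧ Y ∈ p ∧ (compan G p Y).Finite

/-- Close subsets of a coarse space. -/
def CoarseStructure.Close {X : Type*} (C : CoarseStructure X) (A B : Set X) : Prop :=
  ∃ E ∈ C.sets, A ⊆ ball E B ∧ B ⊆ ball E A

/-- Close subsets of `X_G`. -/
def CloseG {X : Type*} (G : Subgroup (Equiv.Perm X)) (A B : Set X) : Prop :=
  ∃ E ∈ XGsets G, A ⊆ ball E B ∧ B ⊆ ball E A

/-- Linked subsets of `X_G`. -/
def LinkedG {X : Type*} (G : Subgroup (Equiv.Perm X)) (A B : Set X) : Prop :=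
  (A.Finite ∧ B.Finite) ∨
    ∃ A' ⊆ A, ∃ B' ⊆ B, A'.Infinite ∧ B'.Infinite ∧ CloseG G A' B'


open Set

/-- The `n`-th block `{g_0^{ε_0} ⋯ g_n^{ε_n} x_n : ε_i ∈ {0,1}}`. -/
def pwBlock {X : Type*} (g : ℕ → Equiv.Perm X) (x : ℕ → X) (n : ℕ) : Set X :=
  {y | ∃ ε : Fin (n + 1) → Bool,
    y = ((List.ofFn fun i : Fin (n + 1) =>
      (g i) ^ (if ε i then 1 else 0)).prod : Equiv.Perm X) (x n)}

/-- A piece-wise shifted FP-set determined by the group `G`. -/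
def IsPWShiftedFP {X : Type*} (G : Subgroup (Equiv.Perm X)) (Y : Set X) : Prop :=
  ∃ g : ℕ → Equiv.Perm X, ∃ x : ℕ → X,
    (∀ n, g n ∈ G) ∧
    (∀ m n, m ≠ n → Disjoint (pwBlock g x m) (pwBlock g x n)) ∧
    (∀ n, (pwBlock g x n).ncard = 2 ^ (n + 1)) ∧
    Y = ⋃ n, pwBlock g x n

/-- The group of all self-homeomorphisms of a topological space, as a subgroup
of the permutation group. -/
def homeoSubgroup (X : Type*) [TopologicalSpace X] : Subgroup (Equiv.Perm X) where
  carrier := {g | Continuous g ∧ Continuous g.symm}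
  one_mem' := ⟨continuous_id, continuous_id⟩
  mul_mem' := by
    rintro a b ⟨ha1, ha2⟩ ⟨hb1, hb2⟩
    refine ⟨?_, ?_⟩
    · simpa [Equiv.Perm.mul_def, Equiv.coe_trans] using ha1.comp hb1
    · simpa [Equiv.Perm.mul_def, Equiv.symm_trans_apply] using (hb2.comp ha2 : _)
  inv_mem' := by
    rintro a ⟨ha1, ha2⟩
    exact ⟨ha2, ha1⟩


/-- The parallelity relation on ultrafilters over the coarse space `X_G`. -/
def ParallelG {X : Type*} (G : Subgroup (Equiv.Perm X)) (p q : Ultrafilter X) : Prop :=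
  ∃ E ∈ XGsets G, ∀ P ∈ p, ball E P ∈ q

/-- Linked subsets of a coarse space. -/
def CoarseStructure.Linked {X : Type*} (C : CoarseStructure X) (A B : Set X) : Prop :=
  (C.Bounded A ∧ C.Bounded B) ∨
    ∃ A' ⊆ A, ∃ B' ⊆ B, ¬ C.Bounded A' ∧ ¬ C.Bounded B' ∧ C.Close A' B'

/-- The orbit `Gp` viewed as a subset of the space `X*` of free ultrafilters. -/
def freeOrbit {X : Type*} (G : Subgroup (Equiv.Perm X)) (p : Ultrafilter X) :
    Set (FreeUF X) :=
  {q | q.1 ∈ ufOrbit G p}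

/-!
Density of the orbit `Gp` in `X*` gives `g, k ∈ G` with `g⁻¹A ∈ p` and `k⁻¹B ∈ p`. Since `p` is
free, `C = g⁻¹A ∩ k⁻¹B` is infinite, and `A' = gC`, `B' = kC` satisfy `A' = (gk⁻¹)B'`.
-/

theorem IsFree.infinite_of_mem {X : Type*} {p : Ultrafilter X} (hp : IsFree p) {C : Set X}
    (hC : C ∈ p) : C.Infinite :=
  Filter.cofinite_inf_principal_neBot_iff.mp <|
    p.neBot.mono (le_inf hp (Filter.le_principal_iff.mpr hC))

theorem Set.Infinite.exists_isFree_mem {X : Type*} {A : Set X} (hA : A.Infinite) :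
    ∃ p : Ultrafilter X, IsFree p ∧ A ∈ p := by
  have := hA.cofinite_inf_principal_neBot
  obtain ⟨p, hp⟩ := Ultrafilter.exists_le (Filter.cofinite ⊓ Filter.principal A)
  exact ⟨p, hp.trans inf_le_left, Filter.le_principal_iff.mp (hp.trans inf_le_right)⟩

theorem exists_preimage_mem_of_dense_freeOrbit {X : Type*} {G : Subgroup (Equiv.Perm X)}
    {p : Ultrafilter X} (hp : Dense (freeOrbit G p)) {S : Set X} (hS : S.Infinite) :
    ∃ g ∈ G, (⇑g) ⁻¹' S ∈ p := by
  obtain ⟨u, hu_free, hSu⟩ := hS.exists_isFree_mem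
  have hopen : IsOpen {q : FreeUF X | S ∈ q.1} :=
    (ultrafilter_isOpen_basic S).preimage continuous_subtype_val
  obtain ⟨q, ⟨g, hg, hq⟩, hSq⟩ := hp.exists_mem_open hopen ⟨⟨u, hu_free⟩, hSu⟩
  exact ⟨g, hg, Ultrafilter.mem_map.mp (hq ▸ hSq)⟩

theorem lambdaTight_of_topTransitive_general {X : Type*}
    (G : Subgroup (Equiv.Perm X)) (h : ∃ p : FreeUF X, Dense (freeOrbit G p.1)) :
    ∀ A B : Set X, A.Infinite → B.Infinite →
      ∃ A' ⊆ A, ∃ B' ⊆ B, A'.Infinite ∧ B'.Infinite ∧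
        ∃ F : Finset (Equiv.Perm X), ↑F ⊆ (G : Set (Equiv.Perm X)) ∧
          A' ⊆ {x : X | ∃ g ∈ F, ∃ b ∈ B', x = g b} := by
  obtain ⟨p, hdense⟩ := h
  intro A B hA hB
  obtain ⟨g, hg, hgA⟩ := exists_preimage_mem_of_dense_freeOrbit hdense hA
  obtain ⟨k, hk, hkB⟩ := exists_preimage_mem_of_dense_freeOrbit hdense hB
  set C := (⇑g) ⁻¹' A ∩ (⇑k) ⁻¹' B
  have hC : C.Infinite := p.2.infinite_of_mem (Filter.inter_mem hgA hkB)
  refine ⟨g '' C, image_subset_iff.mpr inter_subset_left,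
    k '' C, image_subset_iff.mpr inter_subset_right,
    hC.image g.injective.injOn, hC.image k.injective.injOn,
    {g * k⁻¹}, by simpa using mul_mem hg (inv_mem hk), ?_⟩
  rintro _ ⟨c, hc, rfl⟩
  exact ⟨g * k⁻¹, Finset.mem_singleton_self _, k c, mem_image_of_mem k hc, by simp⟩

/-- If `(G, X*)` is topologically transitive (some orbit is dense in
`X*`) then `X_G` is λ-tight: any two infinite subsets `A, B` of `X` are linked. -/
theorem lambdaTight_of_topTransitive {X : Type*} [Infinite X]
    (G : Subgroup (Equiv.Perm X)) (h : ∃ p : FreeUF X, Dense (freeOrbit G p.1)) :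
    ∀ A B : Set X, A.Infinite → B.Infinite →
      ∃ A' ⊆ A, ∃ B' ⊆ B, A'.Infinite ∧ B'.Infinite ∧
        ∃ F : Finset (Equiv.Perm X), ↑F ⊆ (G : Set (Equiv.Perm X)) ∧
          A' ⊆ {x : X | ∃ g ∈ F, ∃ b ∈ B', x = g b} :=
  lambdaTight_of_topTransitive_general G h
end

section
/- A subset A of X_G is scattered if and only if the orbit Gp is discrete (in the subspace topology of X*) for every free ultrafilter p with A ∈ p. -/
open Set

open Set

/-!
The group acts on `βX` by homeomorphisms, so the orbit `Gp` is discrete as soon as `p` is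
isolated in it; and `p` is not isolated in `Gp` iff `Δ_p(P)` is infinite for every `P ∈ p`.

If all orbits through `A*` are discrete and `Y ⊆ A` is infinite, Zorn and compactness give a
closed invariant set `M` minimal among those meeting `Y*`. Every `z ∈ M ∩ Y*` has dense orbit
in `M` and is isolated in that orbit, hence isolated in `M`. So the compact set `M ∩ Y*` is
finite, and it contains `Δ_q(Y)` for each of its points `q`.

Conversely, if `p ∈ A*` is not isolated in `Gp`, choose `g_n ∈ G` inductively so that the
`2^n` ultrafilters `g_0^{ε_0} ⋯ g_{n-1}^{ε_{n-1}} p` are distinct and contain `A`, and then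
points `x_n` making all the points `g_0^{ε_0} ⋯ g_n^{ε_n} x_n` distinct and members of `A`. For
a free `u` containing the set `Y` of these points, the bit `ε_k` is `u`-almost surely some
`b_k`, and the conjugate of `g_k^{±1}` that flips `ε_k` sends `u` to a member of `Δ_u(Y)`;
these are pairwise distinct.
-/

open Function Topology Pointwise MulAction

instance Subgroup.continuousConstSMul {M α : Type*} [Group M] [MulAction M α]
    [TopologicalSpace α] [ContinuousConstSMul M α] (H : Subgroup M) : ContinuousConstSMul H α :=
  ⟨fun h => continuous_const_smul (h : M)⟩

section Dynamics

variable {Γ α : Type*} [TopologicalSpace α]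

theorem exists_isOpen_inter_eq_singleton_of_finite [T1Space α] {s U : Set α} {z : α}
    (hz : z ∈ s) (hU : U ∈ 𝓝 z) (hfin : (U ∩ s).Finite) : ∃ V, IsOpen V ∧ V ∩ s = {z} := by
  refine ⟨interior U ∩ ((U ∩ s) \ {z})ᶜ,
    isOpen_interior.inter (hfin.sdiff.isClosed.isOpen_compl), ?_⟩
  ext y
  have hzU : z ∈ interior U := mem_interior_iff_mem_nhds.2 hU
  have hyU : y ∈ interior U → y ∈ U := fun hy => interior_subset hy
  simp only [Set.mem_inter_iff, Set.mem_compl_iff, Set.mem_sdiff, Set.mem_singleton_iff]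
  grind

theorem exists_minimal_isClosed_invariant_inter_nonempty [SMul Γ α] [CompactSpace α]
    {K : Set α} (hK : IsClosed K) (hne : K.Nonempty) :
    ∃ M, Minimal (fun F : Set α => IsClosed F ∧ (∀ g : Γ, ∀ x ∈ F, g • x ∈ F) ∧
      (F ∩ K).Nonempty) M := by
  refine (zorn_superset_nonempty {F : Set α | IsClosed F ∧ (∀ g : Γ, ∀ x ∈ F, g • x ∈ F) ∧
    (F ∩ K).Nonempty} ?_ Set.univ ⟨isClosed_univ, fun _ _ _ => trivial, by simpa using hne⟩).imp
    fun M hM => hM.2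
  rintro c hc hchain ⟨F₀, hF₀⟩
  refine ⟨⋂₀ c, ⟨isClosed_sInter fun F hF => (hc hF).1,
    fun g x hx F hF => (hc hF).2.1 g x (hx F hF), ?_⟩, fun F hF => Set.sInter_subset_of_mem hF⟩
  have : Nonempty c := ⟨⟨F₀, hF₀⟩⟩
  obtain ⟨x, hx⟩ := IsCompact.nonempty_iInter_of_directed_nonempty_isCompact_isClosed
    (fun F : c => (F : Set α) ∩ K)
    (fun F₁ F₂ => (hchain.total F₁.2 F₂.2).elim
      (fun h => ⟨F₁, subset_rfl, Set.inter_subset_inter_left K h⟩)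
      (fun h => ⟨F₂, Set.inter_subset_inter_left K h, subset_rfl⟩))
    (fun F => (hc F.2).2.2) (fun F => ((hc F.2).1.inter hK).isCompact)
    (fun F => (hc F.2).1.inter hK)
  rw [Set.mem_iInter] at hx
  exact ⟨x, Set.mem_sInter.2 fun F hF => (hx ⟨F, hF⟩).1, (hx ⟨F₀, hF₀⟩).2⟩

variable [Group Γ] [MulAction Γ α] [ContinuousConstSMul Γ α]

theorem isDiscrete_orbit_iff {z : α} :
    IsDiscrete (orbit Γ z) ↔ ∃ U, IsOpen U ∧ U ∩ orbit Γ z = {z} := by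
  rw [isDiscrete_iff_forall_mem_exists_isOpen]
  refine ⟨fun h => h z (mem_orbit_self z), ?_⟩
  rintro ⟨U, hU, hUz⟩ _ ⟨g, rfl⟩
  refine ⟨g • U, hU.smul g, ?_⟩
  rw [← smul_orbit g z, ← Set.smul_set_inter, hUz, Set.smul_set_singleton]

theorem infinite_inter_orbit_of_not_isDiscrete [T1Space α] {z : α}
    (h : ¬ IsDiscrete (orbit Γ z)) {U : Set α} (hU : U ∈ 𝓝 z) : (U ∩ orbit Γ z).Infinite :=
  fun hfin => h (isDiscrete_orbit_iff.2
    (exists_isOpen_inter_eq_singleton_of_finite (mem_orbit_self z) hU hfin))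

theorem exists_orbit_inter_finite [CompactSpace α] [T1Space α] {K : Set α} (hK : IsClosed K)
    (hne : K.Nonempty) (hdisc : ∀ z ∈ K, IsDiscrete (orbit Γ z)) :
    ∃ q ∈ K, (orbit Γ q ∩ K).Finite := by
  obtain ⟨M, hM⟩ := exists_minimal_isClosed_invariant_inter_nonempty (Γ := Γ) hK hne
  obtain ⟨hMc, hMinv, q, hqM, hqK⟩ := hM.1
  have hM_closure : ∀ z ∈ M ∩ K, M ⊆ closure (orbit Γ z) := by
    rintro z ⟨hzM, hzK⟩
    refine hM.2 ⟨isClosed_closure, fun g x hx => ?_, z, subset_closure (mem_orbit_self z), hzK⟩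
      (closure_minimal (fun _ ⟨g, hg⟩ => hg ▸ hMinv g z hzM) hMc)
    rw [← smul_orbit g z]
    exact smul_closure_subset g _ (Set.smul_mem_smul_set hx)
  have hdiscMK : IsDiscrete (M ∩ K) := by
    refine isDiscrete_iff_forall_mem_exists_isOpen.2 fun z hz => ?_
    obtain ⟨U, hU, hUz⟩ := isDiscrete_orbit_iff.1 (hdisc z hz.2)
    refine ⟨U, hU, Set.Subset.antisymm (fun y hy => ?_) ?_⟩
    · have := hU.inter_closure ⟨hy.1, hM_closure z hz hy.2.1⟩
      rwa [hUz, closure_singleton] at this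
    · rintro y rfl
      exact ⟨(hUz.ge (Set.mem_singleton y)).1, hz⟩
  refine ⟨q, hqK, (((hMc.inter hK).isCompact).finite hdiscMK).subset ?_⟩
  rintro _ ⟨⟨g, rfl⟩, hK'⟩
  exact ⟨hMinv g q hqM, hK'⟩

end Dynamics

namespace Ultrafilter

variable {X : Type*}

instance : MulAction (Equiv.Perm X) (Ultrafilter X) where
  smul g p := p.map g
  one_smul := map_id
  mul_smul g h p := (map_map p h g).symm

@[simp]
theorem mem_perm_smul {g : Equiv.Perm X} {p : Ultrafilter X} {s : Set X} :
    s ∈ g • p ↔ g ⁻¹' s ∈ p := Iff.rfl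

instance : ContinuousConstSMul (Equiv.Perm X) (Ultrafilter X) where
  continuous_const_smul g := by
    refine ultrafilterBasis_is_basis.continuous_iff.2 ?_
    rintro _ ⟨s, rfl⟩
    exact ultrafilter_isOpen_basic (g ⁻¹' s)

theorem IsFree.perm_smul {p : Ultrafilter X} (hp : IsFree p) (g : Equiv.Perm X) :
    IsFree (g • p) :=
  Filter.map_le_iff_le_comap.2 (hp.trans g.injective.comap_cofinite_eq.ge)

theorem IsFree.infinite_of_mem {p : Ultrafilter X} (hp : IsFree p) {s : Set X} (hs : s ∈ p) :
    s.Infinite :=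
  fun hfin => p.compl_notMem_iff.2 hs (hp hfin.compl_mem_cofinite)

theorem exists_isFree_mem {s : Set X} (hs : s.Infinite) :
    ∃ p : Ultrafilter X, IsFree p ∧ s ∈ p :=
  have := hs.cofinite_inf_principal_neBot
  ⟨Ultrafilter.of _, (Ultrafilter.of_le _).trans inf_le_left,
    Filter.le_principal_iff.1 ((Ultrafilter.of_le _).trans inf_le_right)⟩

theorem isClosed_setOf_isFree : IsClosed {p : Ultrafilter X | IsFree p} := by
  have : {p : Ultrafilter X | IsFree p} =
      ⋂ s ∈ (Filter.cofinite : Filter X).sets, {p | s ∈ p} := by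
    ext p
    simp [IsFree, Filter.le_def]
  rw [this]
  exact isClosed_biInter fun s _ => ultrafilter_isClosed_basic s

end Ultrafilter

open Ultrafilter

section Orbits

variable {X : Type*} {G : Subgroup (Equiv.Perm X)}

theorem ufOrbit_eq_orbit (p : Ultrafilter X) : ufOrbit G p = orbit G p := by
  ext q
  exact ⟨fun ⟨g, hg, hq⟩ => ⟨⟨g, hg⟩, hq.symm⟩, fun ⟨g, hq⟩ => ⟨g, g.2, hq.symm⟩⟩

theorem compan_eq_inter_orbit (p : Ultrafilter X) (B : Set X) :
    compan G p B = {u | B ∈ u} ∩ orbit G p := by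
  rw [← ufOrbit_eq_orbit]
  rfl

theorem isFree_of_mem_orbit {p q : Ultrafilter X} (hp : IsFree p) (hq : q ∈ orbit G p) :
    IsFree q := by
  obtain ⟨g, rfl⟩ := hq
  exact hp.perm_smul g

theorem discreteTopology_freeOrbit_iff {p : Ultrafilter X} (hp : IsFree p) :
    DiscreteTopology (freeOrbit G p) ↔ IsDiscrete (orbit G p) := by
  have hval : IsInducing (Subtype.val : FreeUF X → Ultrafilter X) := IsInducing.subtypeVal
  have hpre : freeOrbit G p = Subtype.val ⁻¹' orbit G p := by
    rw [← ufOrbit_eq_orbit]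
    rfl
  rw [← isDiscrete_iff_discreteTopology, hpre]
  refine ⟨fun h => ?_, fun h => h.preimage hval.continuous.continuousOn Subtype.val_injective⟩
  convert h.image hval
  exact (Set.image_preimage_eq_of_subset fun q hq => ⟨⟨q, isFree_of_mem_orbit hp hq⟩, rfl⟩).symm

theorem compan_infinite_of_not_isDiscrete {p : Ultrafilter X} (h : ¬ IsDiscrete (orbit G p))
    {B : Set X} (hB : B ∈ p) : (compan G p B).Infinite := by
  rw [compan_eq_inter_orbit]
  exact infinite_inter_orbit_of_not_isDiscrete h ((ultrafilter_isOpen_basic B).mem_nhds hB)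

theorem isScattered_of_isDiscrete_orbit {A : Set X}
    (h : ∀ p : Ultrafilter X, IsFree p → A ∈ p → IsDiscrete (orbit G p)) : IsScattered G A := by
  intro Y hYA hY
  obtain ⟨q, ⟨hqf, hqY⟩, hfin⟩ := exists_orbit_inter_finite (Γ := G)
    (isClosed_setOf_isFree.inter (ultrafilter_isClosed_basic Y)) (exists_isFree_mem hY)
    fun z hz => h z hz.1 (Filter.mem_of_superset hz.2 hYA)
  refine ⟨q, hqf, hqY, hfin.subset ?_⟩
  rw [compan_eq_inter_orbit]
  rintro r ⟨hrY, hr⟩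
  exact ⟨hr, isFree_of_mem_orbit hqf hr, hrY⟩

end Orbits

section Word

variable {M : Type*} [Monoid M]

def word (v : ℕ → M) (δ : ℕ → Bool) : ℕ → M
  | 0 => 1
  | n + 1 => word v δ n * if δ n then v n else 1

variable {v v' : ℕ → M} {δ δ' : ℕ → Bool}

@[simp]
theorem word_zero : word v δ 0 = 1 := rfl

theorem word_succ (n : ℕ) : word v δ (n + 1) = word v δ n * if δ n then v n else 1 := rfl

theorem word_congr {n : ℕ} (hv : ∀ i < n, v i = v' i) (hδ : ∀ i < n, δ i = δ' i) :
    word v δ n = word v' δ' n := by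
  induction n with
  | zero => rfl
  | succ n ih =>
    rw [word_succ, word_succ, ih (fun i hi => hv i (by omega)) (fun i hi => hδ i (by omega)),
      hv n n.lt_succ_self, hδ n n.lt_succ_self]

theorem word_mem {S : Type*} [SetLike S M] [SubmonoidClass S M] {H : S} {n : ℕ}
    (hv : ∀ i < n, v i ∈ H) : word v δ n ∈ H := by
  induction n with
  | zero => exact one_mem H
  | succ n ih =>
    rw [word_succ]
    refine mul_mem (ih fun i hi => hv i (by omega)) ?_
    split_ifs
    exacts [hv n n.lt_succ_self, one_mem H]

theorem finite_range_word (v : ℕ → M) (n : ℕ) : (Set.range fun δ => word v δ n).Finite := by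
  induction n with
  | zero => simp
  | succ n ih =>
    refine (ih.union (ih.image (· * v n))).subset ?_
    rintro _ ⟨δ, rfl⟩
    show word v δ (n + 1) ∈ _
    rw [word_succ]
    split_ifs
    exacts [Or.inr ⟨_, ⟨δ, rfl⟩, rfl⟩, Or.inl ⟨δ, (mul_one _).symm⟩]

theorem word_update_succ (v : ℕ → M) (δ : ℕ → Bool) (n : ℕ) (g : M) :
    word (update v n g) δ (n + 1) = word v δ n * if δ n then g else 1 := by
  rw [word_succ, word_congr (v' := v) (fun i hi => update_of_ne hi.ne _ _) fun _ _ => rfl,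
    update_self]

theorem word_update_flip {M : Type*} [Group M] {v : ℕ → M} {δ : ℕ → Bool} {k m : ℕ}
    (hkm : k ≤ m) :
    word v (update δ k (!δ k)) (m + 1) =
      word v δ k * (if δ k then (v k)⁻¹ else v k) * (word v δ k)⁻¹ * word v δ (m + 1) := by
  induction m, hkm using Nat.le_induction with
  | base =>
    have hbelow : word v (update δ k (!δ k)) k = word v δ k :=
      word_congr (fun _ _ => rfl) fun i hi => update_of_ne hi.ne _ _
    rw [word_succ, word_succ, hbelow, update_self]
    cases δ k <;> simp [mul_assoc]
  | succ m hkm ih =>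
    rw [word_succ, ih, word_succ (m + 1), update_of_ne (by omega), mul_assoc]

end Word

section Flips

variable {X : Type*} {G : Subgroup (Equiv.Perm X)}

/-- `B k c` stands for the points of `Y` whose `k`-th bit is `c`. -/
theorem compan_infinite_of_flips {Y : Set X} (B : ℕ → Bool → Set X) (hBY : ∀ k c, B k c ⊆ Y)
    (hdisj : ∀ k, Disjoint (B k true) (B k false))
    (hcover : ∀ k, (Y \ (B k true ∪ B k false)).Finite)
    (hflip : ∀ k (s : ℕ → Bool), ∃ h ∈ G, ∀ y ∈ ⋂ i ∈ Set.Iic k, B i (s i),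
      h y ∈ B k (!s k) ∧ ∀ j, k < j → ∀ c, y ∈ B j c → h y ∈ B j c)
    {u : Ultrafilter X} (hu : IsFree u) (hYu : Y ∈ u) : (compan G u Y).Infinite := by
  have hbit : ∀ k, ∃ c, B k c ∈ u := by
    intro k
    have hcov : B k true ∪ B k false ∈ u := by
      filter_upwards [hYu, hu (hcover k).compl_mem_cofinite] with y hyY hy
      by_contra h
      exact hy ⟨hyY, h⟩
    rcases Ultrafilter.union_mem_iff.1 hcov with h | h
    exacts [⟨true, h⟩, ⟨false, h⟩]
  choose b hb using hbit
  have hprefix : ∀ k, ⋂ i ∈ Set.Iic k, B i (b i) ∈ u :=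
    fun k => (Filter.biInter_mem (Set.finite_Iic k)).2 fun i _ => hb i
  choose h hG hh using fun k => hflip k b
  have hflipped : ∀ k, B k (!b k) ∈ h k • u :=
    fun k => mem_perm_smul.2 <| Filter.mem_of_superset (hprefix k) fun y hy => (hh k y hy).1
  have hkept : ∀ j k, j < k → B k (b k) ∈ h j • u := fun j k hjk =>
    mem_perm_smul.2 <| Filter.mem_of_superset (Filter.inter_mem (hprefix j) (hb k))
      fun y hy => (hh j y hy.1).2 k hjk _ hy.2
  have hne : ∀ j k, j < k → h j • u ≠ h k • u := by
    intro j k hjk heq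
    have hdisj' : Disjoint (B k (b k)) (B k (!b k)) := by
      cases b k
      exacts [(hdisj k).symm, hdisj k]
    have := Filter.inter_mem (heq ▸ hkept j k hjk) (hflipped k)
    rw [hdisj'.inter_eq] at this
    exact Filter.empty_notMem _ this
  refine Set.infinite_of_injective_forall_mem (Injective.of_lt_imp_ne hne) fun k => ?_
  rw [compan_eq_inter_orbit]
  exact ⟨mem_perm_smul.2 (Filter.mem_of_superset (mem_perm_smul.1 (hflipped k))
    (Set.preimage_mono (hBY k _))), ⟨h k, hG k⟩, rfl⟩

end Flips

section FPSystem

variable {X : Type*} {G : Subgroup (Equiv.Perm X)} (v : ℕ → Equiv.Perm X) (x : ℕ → X)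

def fpPoint (m : ℕ) (δ : ℕ → Bool) : X := word v δ (m + 1) (x m)

def fpSet : Set X := {y | ∃ m δ, fpPoint v x m δ = y}

def bitSet (k : ℕ) (c : Bool) : Set X := {y | ∃ m δ, k ≤ m ∧ δ k = c ∧ fpPoint v x m δ = y}

variable (G) in
/-- With these properties `fpSet v x` is a piecewise shifted FP-set (`IsPWShiftedFP`), the
`m`-th block being the points `fpPoint v x m δ`. -/
structure IsFPSystem : Prop where
  mem : ∀ n, v n ∈ G
  eq_of_fpPoint_eq : ∀ {m m' δ δ'}, fpPoint v x m δ = fpPoint v x m' δ' →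
    m = m' ∧ ∀ i ≤ m, δ i = δ' i

variable {v x}

theorem IsFPSystem.fpPoint_mem_bitSet_iff (hvx : IsFPSystem G v x) {m k : ℕ} {δ : ℕ → Bool}
    {c : Bool} : fpPoint v x m δ ∈ bitSet v x k c ↔ k ≤ m ∧ δ k = c := by
  refine ⟨?_, fun h => ⟨m, δ, h.1, h.2, rfl⟩⟩
  rintro ⟨m', δ', hkm, rfl, heq⟩
  obtain ⟨rfl, hδ⟩ := hvx.eq_of_fpPoint_eq heq
  exact ⟨hkm, (hδ k hkm).symm⟩

theorem IsFPSystem.infinite_fpSet (hvx : IsFPSystem G v x) : (fpSet v x).Infinite :=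
  Set.infinite_of_injective_forall_mem (f := fun m => fpPoint v x m fun _ => false)
    (fun _ _ h => (hvx.eq_of_fpPoint_eq h).1) fun m => ⟨m, _, rfl⟩

theorem finite_fpSet_diff_bitSet (k : ℕ) :
    (fpSet v x \ (bitSet v x k true ∪ bitSet v x k false)).Finite := by
  refine ((Set.finite_Iio k).biUnion fun m _ =>
    ((finite_range_word v (m + 1)).image fun w => w (x m))).subset ?_
  rintro _ ⟨⟨m, δ, rfl⟩, hnot⟩
  have hmk : m < k := by
    by_contra hmk
    cases hδ : δ k
    exacts [hnot (Or.inr ⟨m, δ, by omega, hδ, rfl⟩), hnot (Or.inl ⟨m, δ, by omega, hδ, rfl⟩)]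
  exact Set.mem_biUnion hmk ⟨_, ⟨δ, rfl⟩, rfl⟩

theorem IsFPSystem.compan_infinite (hvx : IsFPSystem G v x) {u : Ultrafilter X} (hu : IsFree u)
    (hY : fpSet v x ∈ u) : (compan G u (fpSet v x)).Infinite := by
  refine compan_infinite_of_flips (bitSet v x) ?_ ?_ finite_fpSet_diff_bitSet ?_ hu hY
  · rintro k c _ ⟨m, δ, -, -, rfl⟩
    exact ⟨m, δ, rfl⟩
  · refine fun k => Set.disjoint_left.2 ?_
    rintro _ ⟨m, δ, -, hδ, rfl⟩ h
    simp [hvx.fpPoint_mem_bitSet_iff, hδ] at h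
  · intro k s
    have hvk : (if s k then (v k)⁻¹ else v k) ∈ G := by
      split_ifs
      exacts [inv_mem (hvx.mem k), hvx.mem k]
    set t := word v s k * (if s k then (v k)⁻¹ else v k) * (word v s k)⁻¹
    refine ⟨t, mul_mem (mul_mem (word_mem fun i _ => hvx.mem i) hvk)
        (inv_mem (word_mem fun i _ => hvx.mem i)), fun y hy => ?_⟩
    have hy' := Set.mem_iInter₂.1 hy
    obtain ⟨m, δ, hkm, -, rfl⟩ := hy' k Set.self_mem_Iic
    have hδs : ∀ i ≤ k, δ i = s i := fun i hi => (hvx.fpPoint_mem_bitSet_iff.1 (hy' i hi)).2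
    have hflip : t (fpPoint v x m δ) = fpPoint v x m (update δ k (!s k)) := by
      have ht : t = word v δ k * (if δ k then (v k)⁻¹ else v k) * (word v δ k)⁻¹ := by
        rw [hδs k le_rfl, word_congr (δ' := s) (fun _ _ => rfl) fun i hi => hδs i hi.le]
      rw [fpPoint, fpPoint, ← hδs k le_rfl, word_update_flip hkm, ← ht]
      rfl
    refine ⟨?_, fun j hkj c hj => ?_⟩
    · rw [hflip, hvx.fpPoint_mem_bitSet_iff]
      exact ⟨hkm, update_self ..⟩
    · obtain ⟨hjm, hδj⟩ := hvx.fpPoint_mem_bitSet_iff.1 hj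
      rw [hflip, hvx.fpPoint_mem_bitSet_iff, update_of_ne hkj.ne']
      exact ⟨hjm, hδj⟩

end FPSystem

theorem exists_forall_of_exists_update {α : Type*} (P : ℕ → (ℕ → α) → Prop)
    (hP : ∀ n f f', (∀ i < n, f i = f' i) → P n f → P n f') (f₀ : ℕ → α) (h₀ : P 0 f₀)
    (hstep : ∀ n f, P n f → ∃ a, P (n + 1) (update f n a)) : ∃ f, ∀ n, P n f := by
  have : Nonempty α := ⟨f₀ 0⟩
  choose! a ha using hstep
  let F : ℕ → ℕ → α := fun n => Nat.rec f₀ (fun k fk => update fk k (a k fk)) n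
  have hF : ∀ n, P n (F n) := fun n => by
    induction n with
    | zero => exact h₀
    | succ k ih => exact ha k _ ih
  have hstable : ∀ n, ∀ i < n, F n i = F (i + 1) i := by
    intro n
    induction n with
    | zero => intro i hi; omega
    | succ k ih =>
      intro i hi
      rcases Nat.lt_succ_iff_lt_or_eq.1 hi with hik | rfl
      · exact (update_of_ne hik.ne _ _).trans (ih i hik)
      · rfl
  exact ⟨fun i => F (i + 1) i, fun n => hP n _ _ (hstable n) (hF n)⟩

section Construction

variable {X : Type*} {G : Subgroup (Equiv.Perm X)} {p : Ultrafilter X} {A : Set X} {n : ℕ}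
  {v : ℕ → Equiv.Perm X}

theorem exists_mem_injOn_smul {W : Set (Equiv.Perm X)} (hW : W.Finite) (h : InjOn (· • p) W) :
    ∃ C ∈ p, (∀ q : Ultrafilter X, C ∈ q → InjOn (· • q) W) ∧
      ∀ y ∈ C, InjOn (fun w : Equiv.Perm X => w y) W := by
  have hdisj : W.PairwiseDisjoint fun w => ((w • p : Ultrafilter X) : Filter X) :=
    fun w hw w' hw' hne => Ultrafilter.disjoint_iff_not_le.2 fun hle =>
      hne (h hw hw' (Ultrafilter.coe_le_coe.1 hle))
  obtain ⟨S, hS, hSdisj⟩ := hdisj.exists_mem_filter hW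
  refine ⟨⋂ w ∈ W, w ⁻¹' S w, (Filter.biInter_mem hW).2 fun w _ => hS w, ?_, ?_⟩
  · intro q hq w hw w' hw' heq
    by_contra hne
    have hmem : ∀ w ∈ W, S w ∈ w • q :=
      fun w hw => mem_perm_smul.2 (Filter.mem_of_superset hq (Set.biInter_subset_of_mem hw))
    have heq' : w • q = w' • q := heq
    have := Filter.inter_mem (hmem w hw) (heq' ▸ hmem w' hw')
    rw [(hSdisj hw hw' hne).inter_eq] at this
    exact Filter.empty_notMem _ this
  · intro y hy w hw w' hw' heq
    by_contra hne
    have hy' := Set.mem_iInter₂.1 hy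
    exact (hSdisj hw hw' hne).ne_of_mem (hy' w hw) (hy' w' hw') heq

variable (G p A n v) in
structure IsWordStage : Prop where
  mem : ∀ i < n, v i ∈ G
  eq_of_smul_eq : ∀ {δ δ'}, word v δ n • p = word v δ' n • p → ∀ i < n, δ i = δ' i
  mem_smul : ∀ δ, A ∈ word v δ n • p

theorem isWordStage_zero (hA : A ∈ p) : IsWordStage G p A 0 v :=
  ⟨by simp, by simp, by simpa using hA⟩

theorem IsWordStage.congr {v' : ℕ → Equiv.Perm X} (hv : IsWordStage G p A n v)
    (h : ∀ i < n, v i = v' i) : IsWordStage G p A n v' := by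
  have hw : ∀ δ, word v δ n = word v' δ n := fun δ => word_congr h fun _ _ => rfl
  exact ⟨fun i hi => h i hi ▸ hv.mem i hi, fun heq => hv.eq_of_smul_eq (by simpa [hw] using heq),
    fun δ => hw δ ▸ hv.mem_smul δ⟩

theorem IsWordStage.injOn (hv : IsWordStage G p A n v) :
    InjOn (· • p) (Set.range fun δ => word v δ n) := by
  rintro _ ⟨δ, rfl⟩ _ ⟨δ', rfl⟩ heq
  exact word_congr (fun _ _ => rfl) (hv.eq_of_smul_eq heq)

theorem IsWordStage.biInter_preimage_mem (hv : IsWordStage G p A n v) :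
    ⋂ w ∈ Set.range (fun δ => word v δ n), w ⁻¹' A ∈ p :=
  (Filter.biInter_mem (finite_range_word v n)).2 fun _ ⟨δ, hδ⟩ => hδ ▸ hv.mem_smul δ

theorem IsWordStage.exists_succ (H : ∀ B ∈ p, (compan G p B).Infinite)
    (hv : IsWordStage G p A n v) : ∃ g, IsWordStage G p A (n + 1) (update v n g) := by
  set W := Set.range fun δ => word v δ n
  have hW : W.Finite := finite_range_word v n
  obtain ⟨C, hC, hCinj, -⟩ := exists_mem_injOn_smul hW hv.injOn
  -- the new letter `g` comes from a companion `g • p` of `p` that avoids the `w⁻¹ w' • p`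
  obtain ⟨q, hq, hqF⟩ := ((H _ (Filter.inter_mem hC hv.biInter_preimage_mem)).sdiff
    (hW.image2 (fun w w' => (w⁻¹ * w') • p) hW)).nonempty
  rw [compan_eq_inter_orbit, Set.mem_inter_iff, mem_orbit_iff] at hq
  obtain ⟨hCDq, g, rfl⟩ := hq
  have hCq : C ∈ g • p := Filter.mem_of_superset hCDq Set.inter_subset_left
  have hDq : ⋂ w ∈ W, w ⁻¹' A ∈ g • p := Filter.mem_of_superset hCDq Set.inter_subset_right
  have hword : ∀ δ, word (update v n g) δ (n + 1) • p =
      if δ n then word v δ n • (g • p) else word v δ n • p := by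
    intro δ
    rw [word_update_succ]
    split_ifs <;> simp [mul_smul, Subgroup.smul_def]
  have hcross : ∀ δ δ', word v δ n • (g • p) ≠ word v δ' n • p := by
    intro δ δ' heq
    refine hqF ⟨_, ⟨δ, rfl⟩, _, ⟨δ', rfl⟩, ?_⟩
    show ((word v δ n)⁻¹ * word v δ' n) • p = g • p
    rw [mul_smul, ← heq, inv_smul_smul]
  refine ⟨g, ⟨Nat.forall_lt_succ_right.2 ⟨fun i hi => ?_, ?_⟩, fun {δ δ'} heq => ?_, fun δ => ?_⟩⟩
  · rw [update_of_ne hi.ne]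
    exact hv.mem i hi
  · rw [update_self]
    exact g.2
  · rw [hword, hword] at heq
    rw [Nat.forall_lt_succ_right]
    cases hδ : δ n <;> cases hδ' : δ' n <;> simp only [hδ, hδ', Bool.false_eq_true, if_true,
      if_false] at heq
    · exact ⟨hv.eq_of_smul_eq heq, rfl⟩
    · exact (hcross δ' δ heq.symm).elim
    · exact (hcross δ δ' heq).elim
    · have hw : word v δ n = word v δ' n := hCinj _ hCq ⟨δ, rfl⟩ ⟨δ', rfl⟩ heq
      exact ⟨hv.eq_of_smul_eq (by rw [hw]), rfl⟩
  · rw [hword]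
    split_ifs
    · exact mem_perm_smul.2 (Filter.mem_of_superset hDq
        (Set.biInter_subset_of_mem (t := fun w : Equiv.Perm X => w ⁻¹' A) ⟨δ, rfl⟩))
    · exact hv.mem_smul δ

theorem exists_forall_isWordStage (hA : A ∈ p) (H : ∀ B ∈ p, (compan G p B).Infinite) :
    ∃ v, ∀ n, IsWordStage G p A n v :=
  exists_forall_of_exists_update (fun n v => IsWordStage G p A n v)
    (fun _ _ _ h hv => hv.congr h) 1 (isWordStage_zero hA) fun _ _ hv => hv.exists_succ H

theorem IsWordStage.exists_mem_apply_mem_injOn (hv : IsWordStage G p A n v) :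
    ∃ C ∈ p, ∀ y ∈ C, (∀ δ, word v δ n y ∈ A) ∧
      InjOn (fun w : Equiv.Perm X => w y) (Set.range fun δ => word v δ n) := by
  obtain ⟨C, hC, -, hCy⟩ := exists_mem_injOn_smul (finite_range_word v n) hv.injOn
  refine ⟨C ∩ _, Filter.inter_mem hC hv.biInter_preimage_mem,
    fun y hy => ⟨fun δ => ?_, hCy y hy.1⟩⟩
  exact Set.mem_iInter₂.1 hy.2 _ ⟨δ, rfl⟩

theorem exists_seq_mem_fpPoint_ne (v : ℕ → Equiv.Perm X) {C : ℕ → Set X}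
    (hC : ∀ m, (C m).Infinite) :
    ∃ x : ℕ → X, (∀ m, x m ∈ C m) ∧
      ∀ {m m'}, m' < m → ∀ δ δ', fpPoint v x m δ ≠ fpPoint v x m' δ' := by
  let P : ℕ → (ℕ → X) → Prop := fun n x =>
    ∀ m < n, x m ∈ C m ∧ ∀ m' < m, ∀ δ δ', fpPoint v x m δ ≠ fpPoint v x m' δ'
  have hcongr : ∀ n x x', (∀ i < n, x i = x' i) → P n x → P n x' := by
    intro n x x' hxx' hx m hm
    refine ⟨hxx' m hm ▸ (hx m hm).1, fun m' hm' δ δ' => ?_⟩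
    simpa only [fpPoint, hxx' m hm, hxx' m' (hm'.trans hm)] using (hx m hm).2 m' hm' δ δ'
  have hstep : ∀ n x, P n x → ∃ y, P (n + 1) (update x n y) := by
    intro n x hx
    set old := ⋃ m ∈ Set.Iio n, Set.range (fpPoint v x m)
    have hold : old.Finite := (Set.finite_Iio n).biUnion fun m _ =>
      ((finite_range_word v (m + 1)).image fun w => w (x m)).subset (by
        rintro _ ⟨δ, rfl⟩
        exact ⟨_, ⟨δ, rfl⟩, rfl⟩)
    have hbad : (⋃ w ∈ Set.range fun δ => word v δ (n + 1), (w : Equiv.Perm X) ⁻¹' old).Finite :=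
      (finite_range_word v (n + 1)).biUnion fun w _ => hold.preimage w.injective.injOn
    obtain ⟨y, hyC, hybad⟩ := ((hC n).sdiff hbad).nonempty
    refine ⟨y, fun m hm => ?_⟩
    rcases Nat.lt_succ_iff_lt_or_eq.1 hm with hm | rfl
    · exact hcongr n x _ (fun i hi => (update_of_ne hi.ne _ _).symm) hx m hm
    · refine ⟨by simpa using hyC, fun m' hm' δ δ' heq => hybad ?_⟩
      have : word v δ (m + 1) y = fpPoint v x m' δ' := by
        simpa [fpPoint, update_of_ne hm'.ne] using heq
      exact Set.mem_biUnion ⟨δ, rfl⟩ (Set.mem_biUnion hm' ⟨δ', this.symm⟩)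
  obtain ⟨x, hx⟩ := exists_forall_of_exists_update P hcongr (fun _ => (hC 0).nonempty.some)
    (fun _ h => absurd h (Nat.not_lt_zero _)) hstep
  exact ⟨x, fun m => (hx (m + 1) m m.lt_succ_self).1,
    fun {m m'} h => (hx (m + 1) m m.lt_succ_self).2 m' h⟩

theorem exists_isFPSystem_fpSet_subset (hp : IsFree p) (hA : A ∈ p)
    (H : ∀ B ∈ p, (compan G p B).Infinite) : ∃ v x, IsFPSystem G v x ∧ fpSet v x ⊆ A := by
  obtain ⟨v, hv⟩ := exists_forall_isWordStage hA H
  choose C hC hgood using fun m => (hv (m + 1)).exists_mem_apply_mem_injOn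
  obtain ⟨x, hxC, hxne⟩ := exists_seq_mem_fpPoint_ne v fun m => hp.infinite_of_mem (hC m)
  refine ⟨v, x, ⟨fun n => (hv (n + 1)).mem n n.lt_succ_self, fun {m m' δ δ'} heq => ?_⟩, ?_⟩
  · rcases lt_trichotomy m m' with hlt | rfl | hgt
    · exact absurd heq.symm (hxne hlt _ _)
    · have hw : word v δ (m + 1) = word v δ' (m + 1) :=
        (hgood m (x m) (hxC m)).2 ⟨δ, rfl⟩ ⟨δ', rfl⟩ heq
      exact ⟨rfl, fun i hi => (hv (m + 1)).eq_of_smul_eq (by rw [hw]) i (Nat.lt_succ_of_le hi)⟩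
    · exact absurd heq (hxne hgt _ _)
  · rintro _ ⟨m, δ, rfl⟩
    exact (hgood m (x m) (hxC m)).1 δ

theorem not_isScattered_of_not_isDiscrete_orbit (hp : IsFree p) (hA : A ∈ p)
    (h : ¬ IsDiscrete (orbit G p)) : ¬ IsScattered G A := by
  obtain ⟨v, x, hvx, hsub⟩ :=
    exists_isFPSystem_fpSet_subset hp hA fun B hB => compan_infinite_of_not_isDiscrete h hB
  intro hsc
  obtain ⟨u, hu, hYu, hfin⟩ := hsc _ hsub hvx.infinite_fpSet
  exact hvx.compan_infinite hu hYu hfin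

end Construction

theorem scattered_iff_orbits_discrete_general {X : Type*}
    (G : Subgroup (Equiv.Perm X)) (A : Set X) :
    IsScattered G A ↔ ∀ p : Ultrafilter X, IsFree p → A ∈ p →
      DiscreteTopology ↥(freeOrbit G p) := by
  refine ⟨fun hsc p hp hA => ?_, fun h => isScattered_of_isDiscrete_orbit fun p hp hA =>
    (discreteTopology_freeOrbit_iff hp).1 (h p hp hA)⟩
  rw [discreteTopology_freeOrbit_iff hp]
  by_contra h
  exact not_isScattered_of_not_isDiscrete_orbit hp hA h hsc

/-- A subset `A` of `X_G` is scattered iff the orbit `Gp` is discrete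
(in the subspace topology of `X*`) for every free ultrafilter `p` containing `A`. -/
theorem scattered_iff_orbits_discrete {X : Type*} [Infinite X]
    (G : Subgroup (Equiv.Perm X)) (A : Set X) :
    IsScattered G A ↔ ∀ p : Ultrafilter X, IsFree p → A ∈ p →
      DiscreteTopology ↥(freeOrbit G p) :=
  scattered_iff_orbits_discrete_general G A
end
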